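/- arXiv:1810.02158 — 2 statements merged into one kernel-verified Lean document; each statement's English description precedes it below -/
import Mathlib

section
/- For every ζ > 0 with ζ ≠ 1, the function L₀ is differentiable at ζ and twice differentiable at ζ, with L₀'(ζ) = ((ζ+1)(ζ²+1)/(πζ)) · E(2√ζ/(1+ζ)) − ((ζ+1)(ζ−1)²/(πζ)) · K(2√ζ/(1+ζ)) and L₀''(ζ) = ((ζ+1)(2ζ²−1)/(πζ²)) · E(2√ζ/(1+ζ)) − ((ζ−1)(2ζ²+1)/(πζ²)) · K(2√ζ/(1+ζ)). -/
open Real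

/-- `L₀(ζ) = (1/π) ∫₀^π √(1 + ζ² + 2ζ cos θ) (1 + ζ cos θ) dθ`. -/
noncomputable def L0 (ζ : ℝ) : ℝ :=
  (1 / π) * ∫ θ in (0:ℝ)..π, Real.sqrt (1 + ζ ^ 2 + 2 * ζ * Real.cos θ) * (1 + ζ * Real.cos θ)

/-- The complete elliptic integral of the first kind. -/
noncomputable def ellK (k : ℝ) : ℝ :=
  ∫ θ in (0:ℝ)..(π / 2), (Real.sqrt (1 - k ^ 2 * Real.sin θ ^ 2))⁻¹

/-- The complete elliptic integral of the second kind. -/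
noncomputable def ellE (k : ℝ) : ℝ :=
  ∫ θ in (0:ℝ)..(π / 2), Real.sqrt (1 - k ^ 2 * Real.sin θ ^ 2)

/-!
Write `ρ(x, θ) = |1 + x e^{iθ}| = √(1 + x² + 2x cos θ)`, which is positive for `x² ≠ 1`.
There the integrand of `L₀` and its first two `x`-derivatives are jointly continuous, so `L₀`
may be differentiated twice under the integral sign. Each of the two differentiated integrands
equals `A ρ - B / ρ` plus the `θ`-derivative of a combination of `sin θ · ρ` and `sin θ / ρ`
(by `ρ² = 1 + x² + 2x cos θ` and `sin² + cos² = 1`), and these vanish at `0` and `π`.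
Finally, substituting `θ = 2φ` and using `ρ(x, 2φ)² = (1 + x)² (1 - k² sin² φ)` with
`k = 2√x / (1 + x)` turns `∫₀^π ρ` and `∫₀^π 1/ρ` into `2(1 + x) E(k)` and `2 K(k) / (1 + x)`.
-/

open MeasureTheory Metric Set Filter intervalIntegral
open scoped Topology Interval

theorem hasDerivAt_intervalIntegral_of_continuousOn {F F' : ℝ → ℝ → ℝ} {U : Set ℝ}
    {x₀ a b : ℝ} (hU : U ∈ 𝓝 x₀) (hF : ContinuousOn (Function.uncurry F) (U ×ˢ [[a, b]]))
    (hF' : ContinuousOn (Function.uncurry F') (U ×ˢ [[a, b]]))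
    (hderiv : ∀ x ∈ U, ∀ θ ∈ [[a, b]], HasDerivAt (F · θ) (F' x θ) x) :
    HasDerivAt (fun x => ∫ θ in a..b, F x θ) (∫ θ in a..b, F' x₀ θ) x₀ := by
  have slice {G : ℝ → ℝ → ℝ} (hG : ContinuousOn (Function.uncurry G) (U ×ˢ [[a, b]])) {x : ℝ}
      (hx : x ∈ U) : ContinuousOn (G x) [[a, b]] :=
    hG.comp (f := fun θ => (x, θ)) (Continuous.continuousOn (by fun_prop)) fun _ hθ => ⟨hx, hθ⟩
  have hx₀ : x₀ ∈ U := mem_of_mem_nhds hU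
  obtain ⟨ε, hε, hεU⟩ := nhds_basis_closedBall.mem_iff.1 hU
  obtain ⟨C, hC⟩ := ((isCompact_closedBall x₀ ε).prod isCompact_uIcc).exists_bound_of_continuousOn
    (hF'.mono (prod_mono hεU subset_rfl))
  refine (hasDerivAt_integral_of_dominated_loc_of_deriv_le (bound := fun _ => C)
    (closedBall_mem_nhds x₀ hε) ?_ (slice hF hx₀).intervalIntegrable
    ?_ ?_ intervalIntegrable_const ?_).2
  · filter_upwards [hU] with x hx
    exact ((slice hF hx).mono uIoc_subset_uIcc).aestronglyMeasurable measurableSet_uIoc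
  · exact ((slice hF' hx₀).mono uIoc_subset_uIcc).aestronglyMeasurable measurableSet_uIoc
  · exact ae_of_all _ fun θ hθ x hx => hC (x, θ) ⟨hx, uIoc_subset_uIcc hθ⟩
  · exact ae_of_all _ fun θ hθ x hx => hderiv x (hεU hx) θ (uIoc_subset_uIcc hθ)

theorem continuous_of_continuousOn_uncurry {α β γ : Type*} [TopologicalSpace α]
    [TopologicalSpace β] [TopologicalSpace γ] {f : α → β → γ} {S : Set α}
    (hf : ContinuousOn (Function.uncurry f) (S ×ˢ univ)) {x : α} (hx : x ∈ S) :
    Continuous (f x) :=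
  hf.comp_continuous (Continuous.prodMk_right x) fun _ => ⟨hx, trivial⟩

theorem integral_eq_integral_of_hasDerivAt_sub {f g G : ℝ → ℝ} {a b : ℝ}
    (hG : ∀ θ ∈ [[a, b]], HasDerivAt G (f θ - g θ) θ) (hGab : G a = G b)
    (hf : IntervalIntegrable f volume a b) (hg : IntervalIntegrable g volume a b) :
    ∫ θ in a..b, f θ = ∫ θ in a..b, g θ := by
  have h := integral_eq_sub_of_hasDerivAt hG (hf.sub hg)
  rw [intervalIntegral.integral_sub hf hg, hGab, sub_self] at h
  exact sub_eq_zero.1 h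

theorem integral_zero_pi_eq_two_mul_integral_comp_two_mul (f : ℝ → ℝ) :
    ∫ θ in (0:ℝ)..π, f θ = 2 * ∫ φ in (0:ℝ)..(π / 2), f (2 * φ) := by
  rw [integral_comp_mul_left f two_ne_zero, mul_zero, mul_div_cancel₀ _ two_ne_zero, smul_eq_mul,
    mul_inv_cancel_left₀ two_ne_zero]

theorem isOpen_setOf_sq_ne_one : IsOpen {x : ℝ | x ^ 2 ≠ 1} :=
  isOpen_ne_fun (continuous_pow 2) continuous_const

namespace L0

noncomputable def rho (x θ : ℝ) : ℝ := √(1 + x ^ 2 + 2 * x * cos θ)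

noncomputable def integrand (x θ : ℝ) : ℝ := rho x θ * (1 + x * cos θ)

noncomputable def integrand₁ (x θ : ℝ) : ℝ :=
  (x + cos θ) / rho x θ * (1 + x * cos θ) + rho x θ * cos θ

noncomputable def integrand₂ (x θ : ℝ) : ℝ :=
  (1 + 3 * x * cos θ + 2 * cos θ ^ 2) / rho x θ
    - (x + cos θ) ^ 2 * (1 + x * cos θ) / rho x θ ^ 3

noncomputable def L0' (x : ℝ) : ℝ := (1 / π) * ∫ θ in (0:ℝ)..π, integrand₁ x θ

noncomputable def L0'' (x : ℝ) : ℝ := (1 / π) * ∫ θ in (0:ℝ)..π, integrand₂ x θ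

variable {x : ℝ}

theorem one_add_sq_add_two_mul_cos_pos (hx : x ^ 2 ≠ 1) (θ : ℝ) :
    0 < 1 + x ^ 2 + 2 * x * cos θ := by
  rw [show 1 + x ^ 2 + 2 * x * cos θ = (x + cos θ) ^ 2 + sin θ ^ 2 by
    linear_combination -sin_sq_add_cos_sq θ]
  by_contra! h
  have hs : sin θ ^ 2 = 0 := by nlinarith [sq_nonneg (x + cos θ), sq_nonneg (sin θ)]
  have hc : x = -cos θ := by nlinarith [sq_nonneg (x + cos θ), sq_nonneg (sin θ)]
  exact hx (by linear_combination hc * (x - cos θ) - hs + sin_sq_add_cos_sq θ)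

theorem rho_pos (hx : x ^ 2 ≠ 1) (θ : ℝ) : 0 < rho x θ :=
  sqrt_pos.2 (one_add_sq_add_two_mul_cos_pos hx θ)

theorem rho_sq (hx : x ^ 2 ≠ 1) (θ : ℝ) : rho x θ ^ 2 = 1 + x ^ 2 + 2 * x * cos θ :=
  sq_sqrt (one_add_sq_add_two_mul_cos_pos hx θ).le

theorem continuous_rho_uncurry : Continuous (Function.uncurry rho) := by
  unfold rho; fun_prop

theorem hasDerivAt_rho_param (hx : x ^ 2 ≠ 1) (θ : ℝ) :
    HasDerivAt (rho · θ) ((x + cos θ) / rho x θ) x := by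
  have h : HasDerivAt (fun y => 1 + y ^ 2 + 2 * y * cos θ) (2 * x + 2 * cos θ) x := by
    refine (((hasDerivAt_pow 2 x).const_add 1).add
      (((hasDerivAt_id x).const_mul 2).mul_const (cos θ))).congr_deriv ?_
    norm_num
  refine (h.sqrt (one_add_sq_add_two_mul_cos_pos hx θ).ne').congr_deriv ?_
  have hρ := (rho_pos hx θ).ne'
  unfold rho at *
  field_simp

theorem hasDerivAt_rho_angle (hx : x ^ 2 ≠ 1) (θ : ℝ) :
    HasDerivAt (rho x) (-(x * sin θ) / rho x θ) θ := by
  have h := ((hasDerivAt_cos θ).const_mul (2 * x)).const_add (1 + x ^ 2)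
  refine (h.sqrt (one_add_sq_add_two_mul_cos_pos hx θ).ne').congr_deriv ?_
  have hρ := (rho_pos hx θ).ne'
  unfold rho at *
  field_simp

theorem rho_two_mul (hx : 0 ≤ x) (φ : ℝ) :
    rho x (2 * φ) = (1 + x) * √(1 - (2 * √x / (1 + x)) ^ 2 * sin φ ^ 2) := by
  have h1x : 0 < 1 + x := by linarith
  have hk : 1 + x ^ 2 + 2 * x * cos (2 * φ)
      = (1 + x) ^ 2 * (1 - (2 * √x / (1 + x)) ^ 2 * sin φ ^ 2) := by
    rw [cos_two_mul, div_pow, mul_pow, sq_sqrt hx, cos_sq']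
    field_simp
    ring
  rw [rho, hk, sqrt_mul (sq_nonneg _), sqrt_sq h1x.le]

theorem integral_rho (hx : 0 ≤ x) :
    ∫ θ in (0:ℝ)..π, rho x θ = 2 * (1 + x) * ellE (2 * √x / (1 + x)) := by
  simp only [integral_zero_pi_eq_two_mul_integral_comp_two_mul, rho_two_mul hx,
    intervalIntegral.integral_const_mul, ellE]
  ring

theorem integral_inv_rho (hx : 0 ≤ x) :
    ∫ θ in (0:ℝ)..π, (rho x θ)⁻¹ = 2 / (1 + x) * ellK (2 * √x / (1 + x)) := by
  simp only [integral_zero_pi_eq_two_mul_integral_comp_two_mul, rho_two_mul hx, mul_inv,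
    intervalIntegral.integral_const_mul, ellK]
  ring

theorem intervalIntegrable_mul_rho_sub_mul_inv_rho (hx : x ^ 2 ≠ 1) (A B a b : ℝ) :
    IntervalIntegrable (fun θ => A * rho x θ - B * (rho x θ)⁻¹) volume a b := by
  have := continuous_rho_uncurry
  have hρ := fun θ => (rho_pos hx θ).ne'
  unfold Function.uncurry at *
  exact Continuous.intervalIntegrable (by fun_prop (disch := exact hρ _)) a b

theorem integral_mul_rho_sub_mul_inv_rho (hx : 0 ≤ x) (hx2 : x ^ 2 ≠ 1) (A B : ℝ) :
    ∫ θ in (0:ℝ)..π, (A * rho x θ - B * (rho x θ)⁻¹)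
      = 2 * (1 + x) * A * ellE (2 * √x / (1 + x)) - 2 * B / (1 + x) * ellK (2 * √x / (1 + x)) := by
  rw [intervalIntegral.integral_sub, intervalIntegral.integral_const_mul,
    intervalIntegral.integral_const_mul, integral_rho hx, integral_inv_rho hx]
  · ring
  · simpa using intervalIntegrable_mul_rho_sub_mul_inv_rho hx2 A 0 0 π
  · simpa using intervalIntegrable_mul_rho_sub_mul_inv_rho hx2 0 (-B) 0 π

theorem hasDerivAt_integrand (hx : x ^ 2 ≠ 1) (θ : ℝ) :
    HasDerivAt (integrand · θ) (integrand₁ x θ) x :=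
  (hasDerivAt_rho_param hx θ).mul ((hasDerivAt_mul_const (cos θ)).const_add 1)

theorem hasDerivAt_integrand₁ (hx : x ^ 2 ≠ 1) (θ : ℝ) :
    HasDerivAt (integrand₁ · θ) (integrand₂ x θ) x := by
  have hρ := (rho_pos hx θ).ne'
  have h := ((((hasDerivAt_id' x).add_const (cos θ)).div (hasDerivAt_rho_param hx θ) hρ).mul
    ((hasDerivAt_mul_const (cos θ)).const_add 1)).add
    ((hasDerivAt_rho_param hx θ).mul_const (cos θ))
  refine h.congr_deriv ?_
  simp only [Pi.div_apply, integrand₂]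
  field_simp
  ring

theorem continuous_integrand_uncurry : Continuous (Function.uncurry integrand) := by
  have := continuous_rho_uncurry
  unfold integrand Function.uncurry at *
  fun_prop

theorem continuousOn_integrand₁_uncurry :
    ContinuousOn (Function.uncurry integrand₁) ({x | x ^ 2 ≠ 1} ×ˢ univ) := by
  have := continuous_rho_uncurry
  intro p hp
  have hρ := (rho_pos hp.1 p.2).ne'
  unfold integrand₁ Function.uncurry at *
  fun_prop (disch := assumption)

theorem continuousOn_integrand₂_uncurry :
    ContinuousOn (Function.uncurry integrand₂) ({x | x ^ 2 ≠ 1} ×ˢ univ) := by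
  have := continuous_rho_uncurry
  intro p hp
  have hρ := (rho_pos hp.1 p.2).ne'
  unfold integrand₂ Function.uncurry at *
  fun_prop (disch := simp [hρ])

theorem integral_integrand₁ (hx0 : x ≠ 0) (hx : x ^ 2 ≠ 1) :
    ∫ θ in (0:ℝ)..π, integrand₁ x θ = ∫ θ in (0:ℝ)..π,
      ((1 + x ^ 2) / (2 * x) * rho x θ - (1 - x ^ 2) ^ 2 / (2 * x) * (rho x θ)⁻¹) := by
  have hint : IntervalIntegrable (integrand₁ x) volume 0 π :=
    (continuous_of_continuousOn_uncurry continuousOn_integrand₁_uncurry hx).intervalIntegrable _ _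
  refine integral_eq_integral_of_hasDerivAt_sub (G := fun t => sin t * rho x t) (fun θ _ => ?_)
    (by simp) hint (intervalIntegrable_mul_rho_sub_mul_inv_rho hx _ _ _ _)
  refine ((hasDerivAt_sin θ).mul (hasDerivAt_rho_angle hx θ)).congr_deriv ?_
  have hρ := (rho_pos hx θ).ne'
  have hρ_sq := rho_sq hx θ
  have hsc := sin_sq_add_cos_sq θ
  unfold integrand₁
  field_simp
  grind

theorem integral_integrand₂ (hx0 : x ≠ 0) (hx : x ^ 2 ≠ 1) :
    ∫ θ in (0:ℝ)..π, integrand₂ x θ = ∫ θ in (0:ℝ)..π, ((2 * x ^ 2 - 1) / (2 * x ^ 2) * rho x θ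
          - (x ^ 2 - 1) * (2 * x ^ 2 + 1) / (2 * x ^ 2) * (rho x θ)⁻¹) := by
  have hint : IntervalIntegrable (integrand₂ x) volume 0 π :=
    (continuous_of_continuousOn_uncurry continuousOn_integrand₂_uncurry hx).intervalIntegrable _ _
  refine integral_eq_integral_of_hasDerivAt_sub
    (G := fun t => (sin t * rho x t - (x ^ 2 - 1) * (sin t / rho x t)) / (2 * x)) (fun θ _ => ?_)
    (by simp) hint (intervalIntegrable_mul_rho_sub_mul_inv_rho hx _ _ _ _)
  have hρ := (rho_pos hx θ).ne'
  have hsin_div := (hasDerivAt_sin θ).div (hasDerivAt_rho_angle hx θ) hρ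
  refine ((((hasDerivAt_sin θ).mul (hasDerivAt_rho_angle hx θ)).sub
    (hsin_div.const_mul _)).div_const _).congr_deriv ?_
  have hρ_sq := rho_sq hx θ
  have hsc := sin_sq_add_cos_sq θ
  unfold integrand₂
  field_simp
  grind

theorem hasDerivAt_integral {F F' : ℝ → ℝ → ℝ}
    (hF : ContinuousOn (Function.uncurry F) ({x | x ^ 2 ≠ 1} ×ˢ univ))
    (hF' : ContinuousOn (Function.uncurry F') ({x | x ^ 2 ≠ 1} ×ˢ univ))
    (hderiv : ∀ x, x ^ 2 ≠ 1 → ∀ θ, HasDerivAt (F · θ) (F' x θ) x) (hx : x ^ 2 ≠ 1) :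
    HasDerivAt (fun x => ∫ θ in (0:ℝ)..π, F x θ) (∫ θ in (0:ℝ)..π, F' x θ) x :=
  hasDerivAt_intervalIntegral_of_continuousOn (isOpen_setOf_sq_ne_one.mem_nhds hx)
    (hF.mono (prod_mono subset_rfl (subset_univ _)))
    (hF'.mono (prod_mono subset_rfl (subset_univ _)))
    fun y hy θ _ => hderiv y hy θ

theorem hasDerivAt_L0 (hx : x ^ 2 ≠ 1) : HasDerivAt L0 (L0' x) x :=
  (hasDerivAt_integral continuous_integrand_uncurry.continuousOn continuousOn_integrand₁_uncurry
    (fun _ hy => hasDerivAt_integrand hy) hx).const_mul _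

theorem deriv_L0_eventuallyEq (hx : x ^ 2 ≠ 1) : deriv L0 =ᶠ[𝓝 x] L0' := by
  filter_upwards [isOpen_setOf_sq_ne_one.mem_nhds hx] with y hy using (hasDerivAt_L0 hy).deriv

theorem hasDerivAt_L0' (hx : x ^ 2 ≠ 1) : HasDerivAt L0' (L0'' x) x :=
  (hasDerivAt_integral continuousOn_integrand₁_uncurry continuousOn_integrand₂_uncurry
    (fun _ hy => hasDerivAt_integrand₁ hy) hx).const_mul _

theorem L0'_eq (hx : 0 < x) (hx2 : x ^ 2 ≠ 1) :
    L0' x = ((x + 1) * (x ^ 2 + 1) / (π * x)) * ellE (2 * √x / (1 + x))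
      - ((x + 1) * (x - 1) ^ 2 / (π * x)) * ellK (2 * √x / (1 + x)) := by
  rw [L0', integral_integrand₁ hx.ne' hx2, integral_mul_rho_sub_mul_inv_rho hx.le hx2]
  field_simp
  ring

theorem L0''_eq (hx : 0 < x) (hx2 : x ^ 2 ≠ 1) :
    L0'' x = ((x + 1) * (2 * x ^ 2 - 1) / (π * x ^ 2)) * ellE (2 * √x / (1 + x))
      - ((x - 1) * (2 * x ^ 2 + 1) / (π * x ^ 2)) * ellK (2 * √x / (1 + x)) := by
  rw [L0'', integral_integrand₂ hx.ne' hx2, integral_mul_rho_sub_mul_inv_rho hx.le hx2]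
  field_simp
  ring

end L0

open L0 in
theorem stmt_8 (ζ : ℝ) (hζ : 0 < ζ) (hζ1 : ζ ≠ 1) :
    HasDerivAt L0
        (((ζ + 1) * (ζ ^ 2 + 1) / (π * ζ)) * ellE (2 * Real.sqrt ζ / (1 + ζ))
          - ((ζ + 1) * (ζ - 1) ^ 2 / (π * ζ)) * ellK (2 * Real.sqrt ζ / (1 + ζ))) ζ
      ∧ HasDerivAt (deriv L0)
        (((ζ + 1) * (2 * ζ ^ 2 - 1) / (π * ζ ^ 2)) * ellE (2 * Real.sqrt ζ / (1 + ζ))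
          - ((ζ - 1) * (2 * ζ ^ 2 + 1) / (π * ζ ^ 2)) * ellK (2 * Real.sqrt ζ / (1 + ζ))) ζ := by
  have hζ2 : ζ ^ 2 ≠ 1 := (pow_eq_one_iff_of_nonneg hζ.le two_ne_zero).not.2 hζ1
  refine ⟨(hasDerivAt_L0 hζ2).congr_deriv (L0'_eq hζ hζ2), ?_⟩
  exact ((hasDerivAt_L0' hζ2).congr_of_eventuallyEq (deriv_L0_eventuallyEq hζ2)).congr_deriv
    (L0''_eq hζ hζ2)
end

section
/- For every ζ > 0, the equality L₀(ζ) = ζ · L₀(1/ζ) holds if and only if ζ = 1. -/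
/-! Substituting `ζ ↦ 1/ζ` scales the square root by `1/ζ`, so pointwise
`ζ · √(…1/ζ…) (1 + cos θ / ζ) = √(…ζ…) (1 + ζ cos θ) - (ζ - 1/ζ) √(…ζ…) cos θ`, and hence
`π (L₀(ζ) - ζ L₀(1/ζ)) = (ζ - 1/ζ) ∫₀^π √(1 + ζ² + 2ζ cos θ) cos θ dθ`.
The last integral is positive: pairing `θ` with `π - θ` compares the values of the increasing
function `x ↦ √(1 + ζ² + 2ζx)` at `± cos θ`. So equality forces `ζ = 1/ζ`. -/

open Real

lemma one_add_sq_add_two_mul_cos_nonneg (ζ θ : ℝ) : 0 ≤ 1 + ζ ^ 2 + 2 * ζ * cos θ := by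
  nlinarith [sq_nonneg (ζ + cos θ), sin_sq_add_cos_sq θ, sq_nonneg (sin θ)]

lemma integral_comp_cos_mul_cos_pos {f : ℝ → ℝ} (hf : Continuous f)
    (hmono : StrictMonoOn f (Set.Icc (-1) 1)) :
    0 < ∫ θ in (0:ℝ)..π, f (cos θ) * cos θ := by
  set g : ℝ → ℝ := fun θ => f (cos θ) * cos θ
  have hg : Continuous g := by fun_prop
  have hg' : Continuous fun θ => g (π - θ) := hg.comp (by fun_prop)
  have hsplit : ∫ θ in (0:ℝ)..π, g θ = ∫ θ in (0:ℝ)..(π / 2), (g θ + g (π - θ)) := by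
    rw [← intervalIntegral.integral_add_adjacent_intervals (b := π / 2)
        (hg.intervalIntegrable _ _) (hg.intervalIntegrable _ _),
      intervalIntegral.integral_add (hg.intervalIntegrable _ _) (hg'.intervalIntegrable _ _),
      intervalIntegral.integral_comp_sub_left g π, sub_half, sub_zero]
  rw [hsplit]
  refine intervalIntegral.intervalIntegral_pos_of_pos_on
    ((hg.add hg').intervalIntegrable _ _) (fun x hx => ?_) (by positivity)
  have hcos : 0 < cos x := cos_pos_of_mem_Ioo ⟨by linarith [hx.1, pi_pos], hx.2⟩
  have hlt : f (-cos x) < f (cos x) :=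
    hmono ⟨by linarith [cos_le_one x], by linarith⟩ ⟨by linarith, cos_le_one x⟩ (by linarith)
  simp only [g, cos_pi_sub]
  nlinarith

noncomputable def cosMoment (ζ : ℝ) : ℝ :=
  ∫ θ in (0:ℝ)..π, √(1 + ζ ^ 2 + 2 * ζ * cos θ) * cos θ

lemma cosMoment_pos {ζ : ℝ} (hζ : 0 < ζ) : 0 < cosMoment ζ := by
  refine integral_comp_cos_mul_cos_pos (f := fun x => √(1 + ζ ^ 2 + 2 * ζ * x)) (by fun_prop) ?_
  intro x hx y _ hxy
  apply sqrt_lt_sqrt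
  · nlinarith [hx.1, sq_nonneg (ζ - 1)]
  · nlinarith

lemma sqrt_one_add_sq_add_two_mul_cos_one_div (ζ θ : ℝ) (hζ : 0 < ζ) :
    √(1 + (1 / ζ) ^ 2 + 2 * (1 / ζ) * cos θ) = √(1 + ζ ^ 2 + 2 * ζ * cos θ) / ζ := by
  have harg : 1 + (1 / ζ) ^ 2 + 2 * (1 / ζ) * cos θ = (1 + ζ ^ 2 + 2 * ζ * cos θ) / ζ ^ 2 := by
    field_simp
    ring
  rw [harg, sqrt_div (one_add_sq_add_two_mul_cos_nonneg ζ θ), sqrt_sq hζ.le]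

lemma L0_sub_mul_L0_one_div {ζ : ℝ} (hζ : 0 < ζ) :
    L0 ζ - ζ * L0 (1 / ζ) = (ζ - 1 / ζ) * cosMoment ζ / π := by
  have hpoint : ∀ θ : ℝ,
      ζ * (√(1 + (1 / ζ) ^ 2 + 2 * (1 / ζ) * cos θ) * (1 + 1 / ζ * cos θ)) =
        √(1 + ζ ^ 2 + 2 * ζ * cos θ) * (1 + ζ * cos θ) -
          (ζ - 1 / ζ) * (√(1 + ζ ^ 2 + 2 * ζ * cos θ) * cos θ) := by
    intro θ
    rw [sqrt_one_add_sq_add_two_mul_cos_one_div ζ θ hζ]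
    field_simp
    ring
  have hint : ζ * ∫ θ in (0:ℝ)..π,
      √(1 + (1 / ζ) ^ 2 + 2 * (1 / ζ) * cos θ) * (1 + 1 / ζ * cos θ) =
        (∫ θ in (0:ℝ)..π, √(1 + ζ ^ 2 + 2 * ζ * cos θ) * (1 + ζ * cos θ)) -
          (ζ - 1 / ζ) * cosMoment ζ := by
    rw [← intervalIntegral.integral_const_mul, funext hpoint, intervalIntegral.integral_sub
      (by apply Continuous.intervalIntegrable; fun_prop)
      (by apply Continuous.intervalIntegrable; fun_prop),
      intervalIntegral.integral_const_mul, cosMoment]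
  rw [L0, L0, mul_left_comm, hint]
  ring

theorem stmt_13 (ζ : ℝ) (hζ : 0 < ζ) :
    L0 ζ = ζ * L0 (1 / ζ) ↔ ζ = 1 := by
  rw [← sub_eq_zero, L0_sub_mul_L0_one_div hζ, div_eq_zero_iff, mul_eq_zero,
    or_iff_left (cosMoment_pos hζ).ne', or_iff_left pi_ne_zero, sub_eq_zero,
    eq_div_iff hζ.ne', ← sq, pow_eq_one_iff_of_nonneg hζ.le two_ne_zero]
end
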